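/- The sequence m_g of numerical semigroups of genus g in infinite chains satisfies limsup_{g→∞} (m_g)^{1/g} ≤ √2. -/

import Mathlib

/-!
Descendants only remove elements beyond the Frobenius number `F`, so every descendant of `Λ`
contains the small elements of `Λ` (those `≤ F`). If their gcd were `1`, their additive closure
would be cofinite, all descendants would contain a common tail, and there would be finitely many.
So for `Λ` counted by `m_g` the gcd `d` of the small elements is `0` or at least `2`, and `Λ` is
recovered from `d`, from `F ≤ 2g` and from the quotient `{x | d * x ∈ Λ}`, a numerical semigroup
of genus at most `g / 2`. The Kunz coordinates of a semigroup of genus `i` form a composition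
of `i`, so there are at most `2 ^ (i - 1)` of them. Altogether `m_g ≤ (2g + 1)^2 2^(g/2 + 1)`,
and the `g`-th root of the right-hand side tends to `√2`.
-/

def IsNumericalSemigroup (Λ : Set ℕ) : Prop :=
  0 ∈ Λ ∧ (∀ a ∈ Λ, ∀ b ∈ Λ, a + b ∈ Λ) ∧ Λᶜ.Finite

noncomputable def sgGenus (Λ : Set ℕ) : ℕ := Λᶜ.ncard

noncomputable def sgFrobenius (Λ : Set ℕ) : ℕ := sSup Λᶜ

noncomputable def sgMultiplicity (Λ : Set ℕ) : ℕ := sInf (Λ \ {0})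

def IsMinimalGenerator (Λ : Set ℕ) (μ : ℕ) : Prop :=
  μ ∈ Λ ∧ μ ≠ 0 ∧ ¬ ∃ a ∈ Λ, ∃ b ∈ Λ, a ≠ 0 ∧ b ≠ 0 ∧ a + b = μ

def IsEffectiveGenerator (Λ : Set ℕ) (μ : ℕ) : Prop :=
  IsMinimalGenerator Λ μ ∧ sgFrobenius Λ < μ

def IsOrdinary (Λ : Set ℕ) : Prop := ∃ m : ℕ, Λ = {0} ∪ {n : ℕ | m ≤ n}

def IsStrongGenerator (Λ : Set ℕ) (μ : ℕ) : Prop :=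
  IsEffectiveGenerator Λ μ ∧ IsMinimalGenerator (Λ \ {μ}) (sgMultiplicity Λ + μ)

def IsChildOf (Λ' Λ : Set ℕ) : Prop :=
  IsNumericalSemigroup Λ' ∧ Λ' ⊂ Λ ∧ Λ' ∪ {sgFrobenius Λ'} = Λ

def sgDescendants (Λ : Set ℕ) : Set (Set ℕ) :=
  {Λ' | Relation.TransGen IsChildOf Λ' Λ}

open Set Filter

lemma Set.mem_iff_lt_ncard_of_isLowerSet {T : Set ℕ} (hT : IsLowerSet T) (hfin : T.Finite)
    (j : ℕ) : j ∈ T ↔ j < T.ncard := by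
  obtain hu | ⟨a, rfl⟩ := hT.eq_univ_or_Iio
  · exact absurd (hu ▸ hfin) infinite_univ
  · simp

lemma Set.finite_setOf_Ici_subset {α : Type*} [LinearOrder α] [LocallyFiniteOrderBot α]
    (a : α) : {s : Set α | Ici a ⊆ s}.Finite := by
  refine ((finite_Iio a).finite_subsets.image (· ∪ Ici a)).subset fun s hs =>
    ⟨s ∩ Iio a, inter_subset_right, ?_⟩
  ext x
  by_cases hx : x < a
  · simp [hx, not_le.mpr hx]
  · simp [hx, hs (not_lt.mp hx), not_lt.mp hx]

lemma Nat.not_dvd_sub_one_of_dvd {d n : ℕ} (hd : 2 ≤ d) (hn : d ∣ n) (hn0 : n ≠ 0) :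
    ¬ d ∣ n - 1 := fun hn1 => by
  have h1 := Nat.dvd_sub hn hn1
  rw [Nat.sub_sub_self (Nat.one_le_iff_ne_zero.mpr hn0)] at h1
  have := Nat.le_of_dvd one_pos h1
  omega

lemma limsup_rpow_inv_le_of_le_mul_pow {a : ℕ → ℝ} (ha : ∀ n, 0 ≤ a n) {C r : ℝ} (hr : 0 < r)
    (k : ℕ) (hbound : ∀ᶠ n in atTop, a n ≤ C * n ^ k * r ^ n) :
    limsup (fun n => a n ^ (n : ℝ)⁻¹) atTop ≤ r := by
  refine le_of_forall_pos_le_add fun ε hε => limsup_le_of_le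
    (isCoboundedUnder_le_of_le atTop fun n => Real.rpow_nonneg (ha n) _) ?_
  have hq : 1 < (r + ε) / r := by rw [one_lt_div hr]; linarith
  have hpoly : ∀ᶠ n : ℕ in atTop, C * n ^ k < ((r + ε) / r) ^ n := by
    filter_upwards [((tendsto_pow_const_div_const_pow_of_one_lt k hq).const_mul C).eventually
      (gt_mem_nhds (show C * 0 < 1 by simp))] with n hn
    rwa [← mul_div_assoc, div_lt_one (by positivity)] at hn
  filter_upwards [hbound, hpoly, eventually_ne_atTop 0] with n hn hpoly hn0
  have : a n ≤ (r + ε) ^ n := calc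
    a n ≤ C * n ^ k * r ^ n := hn
    _ ≤ ((r + ε) / r) ^ n * r ^ n := by gcongr
    _ = (r + ε) ^ n := by rw [← mul_pow, div_mul_cancel₀ _ hr.ne']
  calc a n ^ (n : ℝ)⁻¹ ≤ ((r + ε) ^ n) ^ (n : ℝ)⁻¹ :=
        Real.rpow_le_rpow (ha n) this (by positivity)
    _ = r + ε := Real.pow_rpow_inv_natCast (by linarith) hn0

lemma two_pow_div_two_le_sqrt_two_pow (n : ℕ) : (2 : ℝ) ^ (n / 2) ≤ √2 ^ n := calc
  (2 : ℝ) ^ (n / 2) = √2 ^ (2 * (n / 2)) := by rw [pow_mul, Real.sq_sqrt zero_le_two]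
  _ ≤ √2 ^ n := pow_le_pow_right₀ (Real.one_le_sqrt.mpr one_le_two) (Nat.mul_div_le n 2)

namespace IsNumericalSemigroup

variable {Λ : Set ℕ}

def toAddSubmonoid (h : IsNumericalSemigroup Λ) : AddSubmonoid ℕ where
  carrier := Λ
  add_mem' ha hb := h.2.1 _ ha _ hb
  zero_mem' := h.1

lemma closure_subset (h : IsNumericalSemigroup Λ) {s : Set ℕ} (hs : s ⊆ Λ) :
    (AddSubmonoid.closure s : Set ℕ) ⊆ Λ :=
  AddSubmonoid.closure_le (S := h.toAddSubmonoid).mpr hs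

lemma mul_mem (h : IsNumericalSemigroup Λ) {x : ℕ} (hx : x ∈ Λ) (k : ℕ) : k * x ∈ Λ := by
  have := nsmul_mem (S := h.toAddSubmonoid) hx k
  rwa [smul_eq_mul] at this

end IsNumericalSemigroup

section Frobenius

variable {Λ Λ' : Set ℕ}

lemma le_sgFrobenius (h : Λᶜ.Finite) {n : ℕ} (hn : n ∉ Λ) : n ≤ sgFrobenius Λ :=
  le_csSup h.bddAbove hn

lemma mem_of_sgFrobenius_lt (h : Λᶜ.Finite) {n : ℕ} (hn : sgFrobenius Λ < n) : n ∈ Λ := by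
  by_contra hn'
  exact hn.not_ge (le_sgFrobenius h hn')

lemma sgFrobenius_eq_zero_of_mem (h : Λᶜ.Finite) (hF : sgFrobenius Λ ∈ Λ) :
    sgFrobenius Λ = 0 := by
  rcases Λᶜ.eq_empty_or_nonempty with he | hne
  · rw [sgFrobenius, he, csSup_empty, bot_eq_zero]
  · exact absurd hF (Nat.sSup_mem hne h.bddAbove)

lemma sgFrobenius_le_of_subset (h' : Λ'ᶜ.Finite) (hsub : Λ' ⊆ Λ) :
    sgFrobenius Λ ≤ sgFrobenius Λ' :=
  csSup_le_csSup' h'.bddAbove (compl_subset_compl.mpr hsub)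

/-- At most one of `x` and `F - x` lies in `Λ`, so `Λ` fills at most half of `[0, F]`. -/
lemma sgFrobenius_le_two_mul_sgGenus (h : IsNumericalSemigroup Λ) :
    sgFrobenius Λ ≤ 2 * sgGenus Λ := by
  set F := sgFrobenius Λ
  by_cases hF : F ∈ Λ
  · simp [F, sgFrobenius_eq_zero_of_mem h.2.2 hF]
  have hsmall : (Λ ∩ Iic F).ncard ≤ sgGenus Λ := by
    refine ncard_le_ncard_of_injOn (F - ·) (fun x hx hFx => hF ?_) ?_ h.2.2
    · simpa [Nat.add_sub_cancel' hx.2] using h.2.1 x hx.1 _ hFx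
    · intro x hx y hy hxy
      have hxF := mem_Iic.mp hx.2
      have hyF := mem_Iic.mp hy.2
      simp only at hxy
      omega
  have hcover : Iic F ⊆ (Λ ∩ Iic F) ∪ Λᶜ := fun x hx => by
    by_cases hxΛ : x ∈ Λ
    exacts [Or.inl ⟨hxΛ, hx⟩, Or.inr hxΛ]
  have hcount := (ncard_le_ncard hcover ((finite_Iic F).inter_of_right Λ |>.union h.2.2)).trans
    (ncard_union_le _ _)
  rw [ncard_Iic_nat] at hcount
  have hg : Λᶜ.ncard = sgGenus Λ := rfl
  omega

end Frobenius

section Multiplicity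

variable {Λ : Set ℕ}

lemma sgMultiplicity_mem_diff (h : IsNumericalSemigroup Λ) : sgMultiplicity Λ ∈ Λ \ {0} := by
  obtain ⟨x, hx⟩ := (h.2.2.union (finite_singleton 0)).infinite_compl.nonempty
  exact Nat.sInf_mem ⟨x, by simp_all⟩

lemma sgMultiplicity_mem (h : IsNumericalSemigroup Λ) : sgMultiplicity Λ ∈ Λ :=
  (sgMultiplicity_mem_diff h).1

lemma sgMultiplicity_pos (h : IsNumericalSemigroup Λ) : 0 < sgMultiplicity Λ :=
  Nat.pos_of_ne_zero (sgMultiplicity_mem_diff h).2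

lemma sgMultiplicity_le {x : ℕ} (hx : x ∈ Λ) (hx0 : x ≠ 0) : sgMultiplicity Λ ≤ x :=
  Nat.sInf_le ⟨hx, hx0⟩

end Multiplicity

section Kunz

variable {Λ : Set ℕ}

noncomputable def kunzCoord (Λ : Set ℕ) (r : ℕ) : ℕ :=
  {j | r + sgMultiplicity Λ * j ∉ Λ}.ncard

noncomputable def kunzBlocks (Λ : Set ℕ) : List ℕ :=
  (List.range (sgMultiplicity Λ - 1)).map fun i => kunzCoord Λ (i + 1)

lemma isLowerSet_setOf_add_mul_notMem (h : IsNumericalSemigroup Λ) (r : ℕ) :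
    IsLowerSet {j | r + sgMultiplicity Λ * j ∉ Λ} := by
  intro a b hba ha hb
  obtain ⟨c, rfl⟩ := Nat.exists_eq_add_of_le hba
  refine ha ?_
  convert h.2.1 _ hb _ (h.mul_mem (sgMultiplicity_mem h) c) using 1
  ring

lemma finite_setOf_add_mul_notMem (h : IsNumericalSemigroup Λ) (r : ℕ) :
    {j | r + sgMultiplicity Λ * j ∉ Λ}.Finite :=
  h.2.2.preimage fun _ _ _ _ hab =>
    Nat.eq_of_mul_eq_mul_left (sgMultiplicity_pos h) (Nat.add_left_cancel hab)

lemma notMem_iff_lt_kunzCoord (h : IsNumericalSemigroup Λ) (x : ℕ) :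
    x ∉ Λ ↔ x / sgMultiplicity Λ < kunzCoord Λ (x % sgMultiplicity Λ) := by
  rw [kunzCoord, ← mem_iff_lt_ncard_of_isLowerSet (isLowerSet_setOf_add_mul_notMem h _)
    (finite_setOf_add_mul_notMem h _), mem_ofPred_eq, Nat.mod_add_div]

lemma kunzCoord_zero (h : IsNumericalSemigroup Λ) : kunzCoord Λ 0 = 0 := by
  have : {j | 0 + sgMultiplicity Λ * j ∉ Λ} = ∅ := by
    ext j
    simpa [mul_comm] using h.mul_mem (sgMultiplicity_mem h) j
  rw [kunzCoord, this, ncard_empty]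

lemma kunzCoord_pos (h : IsNumericalSemigroup Λ) {r : ℕ} (hr0 : r ≠ 0)
    (hr : r < sgMultiplicity Λ) : 0 < kunzCoord Λ r := by
  have hrΛ : r ∉ Λ := fun hrΛ => (sgMultiplicity_le hrΛ hr0).not_gt hr
  simpa [Nat.div_eq_of_lt hr, Nat.mod_eq_of_lt hr] using (notMem_iff_lt_kunzCoord h r).mp hrΛ

lemma sgGenus_eq_sum_kunzCoord (h : IsNumericalSemigroup Λ) :
    sgGenus Λ = ∑ r ∈ Finset.range (sgMultiplicity Λ), kunzCoord Λ r := by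
  classical
  set m := sgMultiplicity Λ
  have hm : 0 < m := sgMultiplicity_pos h
  have hfiber : ∀ r < m, kunzCoord Λ r = (h.2.2.toFinset.filter (· % m = r)).card := by
    intro r hr
    have hinj : Function.Injective (r + m * ·) := fun _ _ hab =>
      Nat.eq_of_mul_eq_mul_left hm (Nat.add_left_cancel hab)
    rw [kunzCoord, ← ncard_image_of_injective _ hinj, ← ncard_coe_finset]
    congr 1
    ext x
    simp only [mem_image, mem_ofPred_eq, Finset.coe_filter, Finite.mem_toFinset, mem_compl_iff]
    constructor
    · rintro ⟨j, hj, rfl⟩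
      exact ⟨hj, by simp [Nat.mod_eq_of_lt hr]⟩
    · rintro ⟨hx, rfl⟩
      exact ⟨x / m, by rwa [Nat.mod_add_div], Nat.mod_add_div x m⟩
  rw [sgGenus, ncard_eq_toFinset_card _ h.2.2, Finset.card_eq_sum_card_fiberwise
    (f := (· % m)) (t := Finset.range m) fun x _ => Finset.mem_range.mpr (Nat.mod_lt x hm)]
  exact Finset.sum_congr rfl fun r hr => (hfiber r (Finset.mem_range.mp hr)).symm

lemma sum_kunzBlocks (h : IsNumericalSemigroup Λ) : (kunzBlocks Λ).sum = sgGenus Λ := by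
  rw [sgGenus_eq_sum_kunzCoord h, ← Nat.sub_add_cancel (sgMultiplicity_pos h),
    Finset.sum_range_succ', kunzCoord_zero h, add_zero]
  rfl

lemma pos_of_mem_kunzBlocks (h : IsNumericalSemigroup Λ) {k : ℕ} (hk : k ∈ kunzBlocks Λ) :
    0 < k := by
  obtain ⟨i, hi, rfl⟩ := List.mem_map.mp hk
  exact kunzCoord_pos h i.succ_ne_zero (by have := List.mem_range.mp hi; omega)

lemma eq_of_kunzBlocks_eq {Λ' : Set ℕ} (h : IsNumericalSemigroup Λ)
    (h' : IsNumericalSemigroup Λ') (hk : kunzBlocks Λ = kunzBlocks Λ') : Λ = Λ' := by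
  have hm : sgMultiplicity Λ = sgMultiplicity Λ' := by
    have hlen := congrArg List.length hk
    simp only [kunzBlocks, List.length_map, List.length_range] at hlen
    have hm := sgMultiplicity_pos h
    have hm' := sgMultiplicity_pos h'
    omega
  have hcoord : ∀ r < sgMultiplicity Λ, kunzCoord Λ r = kunzCoord Λ' r := by
    rintro (_ | i) hi
    · rw [kunzCoord_zero h, kunzCoord_zero h']
    · rw [kunzBlocks, kunzBlocks, ← hm] at hk
      exact List.map_inj_left.mp hk i (List.mem_range.mpr (by omega))
  ext x
  rw [← not_iff_not, notMem_iff_lt_kunzCoord h, notMem_iff_lt_kunzCoord h', ← hm,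
    hcoord _ (Nat.mod_lt x (sgMultiplicity_pos h))]

end Kunz

lemma mapsTo_kunzBlocks (g : ℕ) :
    MapsTo kunzBlocks {Λ | IsNumericalSemigroup Λ ∧ sgGenus Λ = g}
      (range (Composition.blocks : Composition g → List ℕ)) := fun Λ ⟨h, hg⟩ =>
  ⟨⟨kunzBlocks Λ, pos_of_mem_kunzBlocks h, (sum_kunzBlocks h).trans hg⟩, rfl⟩

lemma injOn_kunzBlocks (g : ℕ) :
    InjOn kunzBlocks {Λ | IsNumericalSemigroup Λ ∧ sgGenus Λ = g} :=
  fun _ h _ h' hk => eq_of_kunzBlocks_eq h.1 h'.1 hk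

lemma finite_setOf_sgGenus_eq (g : ℕ) :
    {Λ | IsNumericalSemigroup Λ ∧ sgGenus Λ = g}.Finite :=
  Finite.of_finite_image ((finite_range _).subset (mapsTo_kunzBlocks g).image_subset)
    (injOn_kunzBlocks g)

lemma ncard_setOf_sgGenus_eq_le (g : ℕ) :
    {Λ | IsNumericalSemigroup Λ ∧ sgGenus Λ = g}.ncard ≤ 2 ^ (g - 1) := by
  calc _ ≤ (range (Composition.blocks : Composition g → List ℕ)).ncard :=
        ncard_le_ncard_of_injOn _ (mapsTo_kunzBlocks g) (injOn_kunzBlocks g) (finite_range _)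
    _ ≤ (univ : Set (Composition g)).ncard := by
        rw [← image_univ]
        exact ncard_image_le finite_univ
    _ = 2 ^ (g - 1) := by
        rw [ncard_univ, Nat.card_eq_fintype_card, composition_card]

lemma setOf_sgGenus_le_eq_biUnion (k : ℕ) :
    {Λ | IsNumericalSemigroup Λ ∧ sgGenus Λ ≤ k} =
      ⋃ i ∈ Finset.range (k + 1), {Λ | IsNumericalSemigroup Λ ∧ sgGenus Λ = i} := by
  ext Λ
  simp

lemma finite_setOf_sgGenus_le (k : ℕ) :
    {Λ | IsNumericalSemigroup Λ ∧ sgGenus Λ ≤ k}.Finite := by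
  rw [setOf_sgGenus_le_eq_biUnion]
  exact (Finset.range (k + 1)).finite_toSet.biUnion fun i _ => finite_setOf_sgGenus_eq i

lemma ncard_setOf_sgGenus_le_lt (k : ℕ) :
    {Λ | IsNumericalSemigroup Λ ∧ sgGenus Λ ≤ k}.ncard < 2 ^ (k + 1) := by
  rw [setOf_sgGenus_le_eq_biUnion]
  calc _ ≤ ∑ i ∈ Finset.range (k + 1), {Λ | IsNumericalSemigroup Λ ∧ sgGenus Λ = i}.ncard :=
        Finset.set_ncard_biUnion_le _ _
    _ ≤ ∑ i ∈ Finset.range (k + 1), 2 ^ i :=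
        Finset.sum_le_sum fun i _ =>
          (ncard_setOf_sgGenus_eq_le i).trans (Nat.pow_le_pow_right two_pos (Nat.sub_le i 1))
    _ < 2 ^ (k + 1) := Nat.geomSum_lt le_rfl fun i hi => Finset.mem_range.mp hi

section SmallElements

variable {Λ Λ' : Set ℕ}

def sgSmallElements (Λ : Set ℕ) : Set ℕ := {x ∈ Λ | x ≤ sgFrobenius Λ}

noncomputable def sgSmallGcd (Λ : Set ℕ) : ℕ := Nat.setGcd (sgSmallElements Λ)

def sgQuotient (Λ : Set ℕ) (d : ℕ) : Set ℕ := {x | d * x ∈ Λ}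

lemma IsNumericalSemigroup.quotient (h : IsNumericalSemigroup Λ) (d : ℕ) :
    IsNumericalSemigroup (sgQuotient Λ d) := by
  refine ⟨by simpa [sgQuotient] using h.1, fun a ha b hb => ?_,
    h.2.2.preimage fun a ha b _ hab => ?_⟩
  · simpa [sgQuotient, mul_add] using h.2.1 _ ha _ hb
  · refine Nat.eq_of_mul_eq_mul_left (Nat.pos_of_ne_zero fun hd => ha ?_) hab
    simpa [hd] using h.1

lemma sgGenus_sgQuotient_zero (h : 0 ∈ Λ) : sgGenus (sgQuotient Λ 0) = 0 := by
  simp [sgGenus, sgQuotient, h]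

/-- A gap `d * x` of `Λ` forces the gap `d * x - 1`, as `d` divides every small element. -/
lemma two_mul_sgGenus_sgQuotient_le (h : IsNumericalSemigroup Λ) {d : ℕ} (hd : 2 ≤ d)
    (hdvd : ∀ x ∈ sgSmallElements Λ, d ∣ x) : 2 * sgGenus (sgQuotient Λ d) ≤ sgGenus Λ := by
  set A := (sgQuotient Λ d)ᶜ
  have hd0 : 0 < d := by omega
  have hAfin : A.Finite := (h.quotient d).2.2
  have hA : ∀ x ∈ A, d * x ∉ Λ ∧ d * x ≠ 0 := fun x hx =>
    ⟨hx, fun h0 => hx (by simpa [sgQuotient, h0] using h.1)⟩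
  have hinj : InjOn (d * · - 1) A := fun x hx y hy hxy => by
    have hx0 := (hA x hx).2
    have hy0 := (hA y hy).2
    simp only at hxy
    exact Nat.eq_of_mul_eq_mul_left hd0 (by omega)
  have hpred : ∀ x ∈ A, d * x - 1 ∉ Λ := fun x hx hx' => by
    obtain ⟨hx1, hx0⟩ := hA x hx
    refine Nat.not_dvd_sub_one_of_dvd hd (dvd_mul_right d x) hx0 (hdvd _ ⟨hx', ?_⟩)
    exact (Nat.sub_le _ 1).trans (le_sgFrobenius h.2.2 hx1)
  have hdisj : Disjoint ((d * ·) '' A) ((d * · - 1) '' A) := by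
    refine disjoint_left.mpr ?_
    rintro _ ⟨x, -, rfl⟩ ⟨y, hy, hxy⟩
    have hxy : d * y - 1 = d * x := hxy
    exact Nat.not_dvd_sub_one_of_dvd hd (dvd_mul_right d y) (hA y hy).2
      (hxy ▸ dvd_mul_right d x)
  calc 2 * sgGenus (sgQuotient Λ d)
      = ((d * ·) '' A ∪ (d * · - 1) '' A).ncard := by
        rw [ncard_union_eq hdisj (hAfin.image _) (hAfin.image _), hinj.ncard_image,
          ncard_image_of_injective _ (mul_right_injective₀ hd0.ne'), sgGenus]
        ring
    _ ≤ sgGenus Λ := by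
        refine ncard_le_ncard (union_subset ?_ ?_) h.2.2
        · rintro _ ⟨x, hx, rfl⟩
          exact (hA x hx).1
        · rintro _ ⟨x, hx, rfl⟩
          exact hpred x hx

lemma sgSmallGcd_le_sgFrobenius : sgSmallGcd Λ ≤ sgFrobenius Λ := by
  by_cases hd : sgSmallGcd Λ = 0
  · simp [hd]
  obtain ⟨n, hn, hn0⟩ := Nat.exists_ne_zero_of_setGcd_ne_zero hd
  exact (Nat.le_of_dvd (Nat.pos_of_ne_zero hn0) (Nat.setGcd_dvd_of_mem hn)).trans hn.2

lemma mem_iff_sgSmallGcd_dvd (h : Λᶜ.Finite) (y : ℕ) :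
    y ∈ Λ ↔ sgFrobenius Λ < y ∨
      sgSmallGcd Λ ∣ y ∧ y / sgSmallGcd Λ ∈ sgQuotient Λ (sgSmallGcd Λ) := by
  constructor
  · intro hy
    refine or_iff_not_imp_left.mpr fun hyF => ?_
    have hd : sgSmallGcd Λ ∣ y := Nat.setGcd_dvd_of_mem ⟨hy, not_lt.mp hyF⟩
    exact ⟨hd, by rwa [sgQuotient, mem_ofPred_eq, Nat.mul_div_cancel' hd]⟩
  · rintro (hy | ⟨hd, hy⟩)
    · exact mem_of_sgFrobenius_lt h hy
    · rwa [sgQuotient, mem_ofPred_eq, Nat.mul_div_cancel' hd] at hy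

lemma injOn_sgSmallGcd_sgFrobenius_sgQuotient :
    InjOn (fun Λ => (sgSmallGcd Λ, sgFrobenius Λ, sgQuotient Λ (sgSmallGcd Λ)))
      {Λ : Set ℕ | Λᶜ.Finite} := by
  intro Λ hΛ Λ' hΛ' he
  simp only [Prod.mk.injEq] at he
  obtain ⟨hd, hF, hq⟩ := he
  ext y
  rw [mem_iff_sgSmallGcd_dvd hΛ, mem_iff_sgSmallGcd_dvd hΛ', hq, hF, hd]

lemma IsNumericalSemigroup.of_mem_sgDescendants (hΛ' : Λ' ∈ sgDescendants Λ) :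
    IsNumericalSemigroup Λ' := by
  induction hΛ' with
  | single hc => exact hc.1
  | tail _ _ ih => exact ih

/-- A child removes its own Frobenius number, which is at least that of the parent. -/
lemma IsChildOf.sgSmallElements_subset (hc : IsChildOf Λ' Λ) :
    sgSmallElements Λ ⊆ sgSmallElements Λ' := by
  have hle := sgFrobenius_le_of_subset hc.1.2.2 hc.2.1.1
  refine fun x hx => ⟨?_, hx.2.trans hle⟩
  by_contra hx'
  have hxF : x = sgFrobenius Λ' := by
    have hx₀ := hx.1
    rw [← hc.2.2] at hx₀
    exact hx₀.resolve_left hx'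
  have hFx : sgFrobenius Λ = x := le_antisymm (hxF ▸ hle) hx.2
  have hΛ : Λᶜ.Finite := hc.1.2.2.subset (compl_subset_compl.mpr hc.2.1.1)
  have := sgFrobenius_eq_zero_of_mem hΛ (hFx ▸ hx.1)
  exact hx' (by simpa [← hFx, this] using hc.1.1)

lemma sgSmallElements_subset_of_mem_sgDescendants (hΛ' : Λ' ∈ sgDescendants Λ) :
    sgSmallElements Λ ⊆ sgSmallElements Λ' := by
  induction hΛ' with
  | single hc => exact hc.sgSmallElements_subset
  | tail _ hc ih => exact hc.sgSmallElements_subset.trans ih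

lemma finite_sgDescendants_of_sgSmallGcd_eq_one (h1 : sgSmallGcd Λ = 1) :
    (sgDescendants Λ).Finite := by
  obtain ⟨N, hN⟩ := Nat.exists_mem_closure_of_ge (sgSmallElements Λ)
  refine (finite_setOf_Ici_subset N).subset fun Λ' hΛ' n hn => ?_
  have hsub : sgSmallElements Λ ⊆ Λ' :=
    (sgSmallElements_subset_of_mem_sgDescendants hΛ').trans (sep_subset _ _)
  exact (IsNumericalSemigroup.of_mem_sgDescendants hΛ').closure_subset hsub
    (hN n hn (show sgSmallGcd Λ ∣ n from h1 ▸ one_dvd n))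

lemma sgGenus_sgQuotient_sgSmallGcd_le (h : IsNumericalSemigroup Λ)
    (hinf : (sgDescendants Λ).Infinite) :
    sgGenus (sgQuotient Λ (sgSmallGcd Λ)) ≤ sgGenus Λ / 2 := by
  rcases Nat.lt_or_ge (sgSmallGcd Λ) 2 with hd | hd
  · interval_cases hd' : sgSmallGcd Λ
    · simp [sgGenus_sgQuotient_zero h.1]
    · exact absurd (finite_sgDescendants_of_sgSmallGcd_eq_one hd') hinf
  · have := two_mul_sgGenus_sgQuotient_le h hd fun x hx => Nat.setGcd_dvd_of_mem hx
    omega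

end SmallElements

lemma ncard_setOf_infinite_sgDescendants_le (g : ℕ) :
    {Λ : Set ℕ | IsNumericalSemigroup Λ ∧ sgGenus Λ = g ∧ (sgDescendants Λ).Infinite}.ncard ≤
      (2 * g + 1) ^ 2 * 2 ^ (g / 2 + 1) := by
  set X := {Λ : Set ℕ | IsNumericalSemigroup Λ ∧ sgGenus Λ = g ∧ (sgDescendants Λ).Infinite}
  set T := Iic (2 * g) ×ˢ Iic (2 * g) ×ˢ {Q | IsNumericalSemigroup Q ∧ sgGenus Q ≤ g / 2}
  have hmaps :
      MapsTo (fun Λ => (sgSmallGcd Λ, sgFrobenius Λ, sgQuotient Λ (sgSmallGcd Λ))) X T := by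
    rintro Λ ⟨h, rfl, hinf⟩
    have hF := sgFrobenius_le_two_mul_sgGenus h
    exact ⟨sgSmallGcd_le_sgFrobenius.trans hF, hF, h.quotient _,
      sgGenus_sgQuotient_sgSmallGcd_le h hinf⟩
  calc X.ncard ≤ T.ncard := ncard_le_ncard_of_injOn _ hmaps
        (injOn_sgSmallGcd_sgFrobenius_sgQuotient.mono fun Λ hΛ => hΛ.1.2.2)
        ((finite_Iic _).prod ((finite_Iic _).prod (finite_setOf_sgGenus_le _)))
    _ ≤ (2 * g + 1) * ((2 * g + 1) * 2 ^ (g / 2 + 1)) := by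
        rw [ncard_prod, ncard_prod, ncard_Iic_nat]
        gcongr
        exact (ncard_setOf_sgGenus_le_lt _).le
    _ = (2 * g + 1) ^ 2 * 2 ^ (g / 2 + 1) := by ring

theorem stmt19 :
    Filter.limsup (fun g : ℕ =>
        (({Λ : Set ℕ | IsNumericalSemigroup Λ ∧ sgGenus Λ = g ∧ (sgDescendants Λ).Infinite}.ncard : ℝ))
          ^ ((g : ℝ)⁻¹)) Filter.atTop ≤ Real.sqrt 2 := by
  refine limsup_rpow_inv_le_of_le_mul_pow (fun g => Nat.cast_nonneg _) (by positivity) 2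
    (C := 18) ?_
  filter_upwards [eventually_ge_atTop 1] with g hg
  have hg' : (1 : ℝ) ≤ g := by exact_mod_cast hg
  calc _ ≤ (((2 * g + 1) ^ 2 * 2 ^ (g / 2 + 1) : ℕ) : ℝ) := by
        exact_mod_cast ncard_setOf_infinite_sgDescendants_le g
    _ = 2 * (2 * g + 1) ^ 2 * (2 : ℝ) ^ (g / 2) := by push_cast; ring
    _ ≤ 18 * g ^ 2 * √2 ^ g :=
        mul_le_mul (by nlinarith) (two_pow_div_two_le_sqrt_two_pow g) (by positivity)
          (by positivity)
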